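/- arXiv:2604.05569 — 4 statements merged into one kernel-verified Lean document; each statement's English description precedes it below -/
import Mathlib

section
/- Let M be a metric space, γ : [0,1] → M a continuous path joining u = γ(0) and v = γ(1) with length L(γ) ≥ d(u,v), and let F ⊆ M be a finite set with |F| ≤ 2n+1 points, where r = d(u,v)/(9n) for some positive integer n. Then there exists a point x in the image of γ with d(x, p) ≥ 2r for all p ∈ F. -/
open Set Metric

/-- Length of a path `γ` parametrized on `[0,1]`, as the supremum over partitions
`0 = t₀ ≤ ⋯ ≤ tₙ = 1` of `∑ d(γ tᵢ, γ tᵢ₊₁)`. -/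
noncomputable def pathLength {M : Type*} [MetricSpace M] (γ : ℝ → M) : ℝ :=
  (eVariationOn γ (Set.Icc 0 1)).toReal

/-- The path `γ` has finite length. -/
def FiniteLength {M : Type*} [MetricSpace M] (γ : ℝ → M) : Prop :=
  eVariationOn γ (Set.Icc 0 1) ≠ ⊤

/-- `γ` is a continuous path on `[0,1]` joining `p` and `q`. -/
def IsPathFrom {M : Type*} [MetricSpace M] (γ : ℝ → M) (p q : M) : Prop :=
  ContinuousOn γ (Set.Icc 0 1) ∧ γ 0 = p ∧ γ 1 = q

/-- `M` is a length space: distances are infima of lengths of joining paths. -/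
def IsLengthSpace (M : Type*) [MetricSpace M] : Prop :=
  ∀ p q : M, ∀ ε > 0, ∃ γ : ℝ → M, IsPathFrom γ p q ∧ FiniteLength γ ∧
    pathLength γ < dist p q + ε

/-- The distance from `x` maps `s` onto an interval containing `[0, dist x y]`, and this interval
is covered by the `F.card` intervals `(dist x p - ρ, dist x p + ρ)`; compare Lebesgue measures. -/
theorem dist_le_of_isPreconnected_subset_biUnion_ball {M : Type*} [MetricSpace M] {s : Set M}
    (hs : IsPreconnected s) {x y : M} (hx : x ∈ s) (hy : y ∈ s) {F : Finset M} {ρ : ℝ}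
    (hcover : s ⊆ ⋃ p ∈ F, ball p ρ) :
    dist x y ≤ 2 * ρ * F.card := by
  have hρ : 0 ≤ ρ := by
    obtain ⟨p, -, hxp⟩ := mem_iUnion₂.1 (hcover hx)
    exact dist_nonneg.trans (mem_ball.1 hxp).le
  have hIcc : Icc 0 (dist x y) ⊆ dist x '' s := by
    refine (hs.image _ (continuous_const.dist continuous_id).continuousOn).Icc_subset ?_ ?_
    · exact ⟨x, hx, dist_self x⟩
    · exact mem_image_of_mem _ hy
  have himage : dist x '' s ⊆ ⋃ p ∈ F, ball (dist x p) ρ := by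
    rintro _ ⟨z, hz, rfl⟩
    obtain ⟨p, hp, hzp⟩ := mem_iUnion₂.1 (hcover hz)
    refine mem_iUnion₂.2 ⟨p, hp, ?_⟩
    rw [mem_ball, Real.dist_eq, dist_comm x z, dist_comm x p]
    exact (abs_dist_sub_le z p x).trans_lt (mem_ball.1 hzp)
  have hvol : ENNReal.ofReal (dist x y) ≤ ENNReal.ofReal (2 * ρ * F.card) := calc
    ENNReal.ofReal (dist x y) = MeasureTheory.volume (Icc 0 (dist x y)) := by
      rw [Real.volume_Icc, sub_zero]
    _ ≤ ∑ p ∈ F, MeasureTheory.volume (ball (dist x p) ρ) :=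
      (MeasureTheory.measure_mono (hIcc.trans himage)).trans
        (MeasureTheory.measure_biUnion_finset_le F _)
    _ = ENNReal.ofReal (2 * ρ * F.card) := by
      simp only [Real.volume_ball, Finset.sum_const, nsmul_eq_mul]
      rw [← ENNReal.ofReal_natCast, ← ENNReal.ofReal_mul (Nat.cast_nonneg _), mul_comm]
  exact (ENNReal.ofReal_le_ofReal_iff (by positivity)).1 hvol

theorem exists_point_far_from_finset_general {M : Type*} [MetricSpace M] (u v : M)
    (n : ℕ) (γ : ℝ → M) (hγ : IsPathFrom γ u v)
    (F : Finset M) (hF : F.card ≤ 2 * n) :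
    ∃ x ∈ γ '' Set.Icc (0:ℝ) 1, ∀ p ∈ F, 2 * (dist u v / (9 * n)) ≤ dist x p := by
  set r := dist u v / (9 * n)
  by_contra! hnear
  have hcover : γ '' Icc 0 1 ⊆ ⋃ p ∈ F, ball p (2 * r) := fun x hx ↦ by
    obtain ⟨p, hp, hxp⟩ := hnear x hx
    exact mem_iUnion₂.2 ⟨p, hp, mem_ball.2 hxp⟩
  have hu : u ∈ γ '' Icc 0 1 := ⟨0, by norm_num, hγ.2.1⟩
  have hv : v ∈ γ '' Icc 0 1 := ⟨1, by norm_num, hγ.2.2⟩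
  have hdist := dist_le_of_isPreconnected_subset_biUnion_ball
    (isPreconnected_Icc.image γ hγ.1) hu hv hcover
  have hr : 0 ≤ r := by positivity
  have hnr : n * r ≤ dist u v / 9 := by
    rcases Nat.eq_zero_or_pos n with rfl | hn
    · simp only [Nat.cast_zero, zero_mul]; positivity
    · simp only [r]
      field_simp
      rfl
  have hF' : (F.card : ℝ) ≤ 2 * n := by exact_mod_cast hF
  -- `d(u,v) ≤ 4r|F| ≤ 8nr ≤ 8d(u,v)/9`, so `r = 0` and no ball of radius `2r` contains `u`.
  have huv : dist u v = 0 := by nlinarith [dist_nonneg (x := u) (y := v)]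
  obtain ⟨p, -, hup⟩ := hnear u hu
  simp only [r, huv, zero_div, mul_zero] at hup
  exact dist_nonneg.not_gt hup

/-- On a path joining `u` and `v` of length at least `d(u,v)`, with `r = d(u,v)/(9n)`,
one can find a point avoiding `2r`-neighbourhoods of any `2n` prescribed points. -/
theorem exists_point_far_from_finset {M : Type*} [MetricSpace M] (u v : M)
    (huv : u ≠ v) (n : ℕ) (hn : 0 < n) (γ : ℝ → M) (hγ : IsPathFrom γ u v)
    (hfin : FiniteLength γ) (hL : dist u v ≤ pathLength γ)
    (F : Finset M) (hF : F.card ≤ 2 * n) :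
    ∃ x ∈ γ '' Set.Icc (0:ℝ) 1, ∀ p ∈ F, 2 * (dist u v / (9 * n)) ≤ dist x p :=
  exists_point_far_from_finset_general u v n γ hγ F hF
end

section
/- Let M be a length space, f : M → ℝ a 1-Lipschitz function, and ε > 0 with points u ≠ v in M satisfying (f u - f v)/d(u,v) > 1 - ε. Then for every r with 0 < r < d(u,v)/2 and every δ > 0, there exist points x, z in M with d(x,z) = r lying on a path from u to v of length less than (1+δ)·d(u,v), such that (f x - f z)/d(x,z) > 1 - (δ·d(u,v) + ε·d(u,v))/r. -/
open Set Metric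

/-- Evaluation of a Lipschitz function `f` on the elementary molecule `m_{p,q}`,
i.e. `⟨f, m_{p,q}⟩ = (f p - f q) / d(p,q)`. -/
noncomputable def molEval {M : Type*} [MetricSpace M] (f : M → ℝ) (p q : M) : ℝ :=
  (f p - f q) / dist p q

/-! Take `x = u` and let `z` be a point at distance `r` from `u` on an almost geodesic path `γ`
from `u` to `v` (intermediate value theorem). Since `d(u,z) + d(z,v)` is at most the length of `γ`,
which exceeds `d(u,v)` by less than `δ d(u,v)`, and `f` is 1-Lipschitz on the leg from `z` to `v`,
the pair `(u,z)` loses at most `(δ + ε) d(u,v)` of the increment `f u - f v`. -/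

section

variable {M : Type*} [MetricSpace M]

theorem dist_add_dist_le_pathLength {γ : ℝ → M}
    (hγ : FiniteLength γ) {t : ℝ} (ht : t ∈ Icc (0 : ℝ) 1) :
    dist (γ 0) (γ t) + dist (γ t) (γ 1) ≤ pathLength γ := by
  have hsplit : eVariationOn γ (Icc 0 t) + eVariationOn γ (Icc t 1) =
      eVariationOn γ (Icc 0 1) := by
    simpa using eVariationOn.Icc_add_Icc γ (s := univ) ht.1 ht.2 (mem_univ t)
  have hchords : edist (γ 0) (γ t) + edist (γ t) (γ 1) ≤ eVariationOn γ (Icc 0 1) :=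
    hsplit ▸ add_le_add
      (eVariationOn.edist_le γ ⟨le_rfl, ht.1⟩ ⟨ht.1, le_rfl⟩)
      (eVariationOn.edist_le γ ⟨le_rfl, ht.2⟩ ⟨ht.2, le_rfl⟩)
  have := ENNReal.toReal_mono hγ hchords
  rwa [ENNReal.toReal_add (edist_ne_top _ _) (edist_ne_top _ _), ← dist_edist,
    ← dist_edist] at this

theorem IsPathFrom.exists_dist_eq {γ : ℝ → M} {p q : M}
    (hγ : IsPathFrom γ p q) {r : ℝ} (hr : r ∈ Icc 0 (dist p q)) :
    ∃ t ∈ Icc (0 : ℝ) 1, dist p (γ t) = r := by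
  obtain ⟨hcont, h0, h1⟩ := hγ
  have hdist : ContinuousOn (fun t => dist p (γ t)) (Icc 0 1) :=
    (continuous_const.dist continuous_id).comp_continuousOn hcont
  have hivt := intermediate_value_Icc zero_le_one hdist
  simp only [h0, h1, dist_self] at hivt
  exact hivt hr

theorem one_sub_div_le_molEval {f : M → ℝ}
    (hf : LipschitzWith 1 f) {p y : M} (hpy : p ≠ y) (q : M) :
    1 - (dist p y + dist y q - (f p - f q)) / dist p y ≤ molEval f p y := by
  have hpos : 0 < dist p y := dist_pos.2 hpy
  have hlip : f y - f q ≤ dist y q := by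
    simpa using (le_abs_self _).trans (hf.dist_le_mul y q)
  rw [molEval, one_sub_div hpos.ne', div_le_div_iff_of_pos_right hpos]
  linarith

end

theorem exists_norming_pair_at_scale_general {M : Type*} [MetricSpace M]
    (hM : IsLengthSpace M) (f : M → ℝ) (hf : LipschitzWith 1 f)
    (ε : ℝ) (u v : M)
    (hfuv : molEval f u v > 1 - ε) (r : ℝ) (hr : 0 < r) (hr2 : r < dist u v / 2)
    (δ : ℝ) (hδ : 0 < δ) :
    ∃ (x z : M) (γ : ℝ → M), IsPathFrom γ u v ∧ FiniteLength γ ∧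
      pathLength γ < (1 + δ) * dist u v ∧
      x ∈ γ '' Set.Icc (0:ℝ) 1 ∧ z ∈ γ '' Set.Icc (0:ℝ) 1 ∧ dist x z = r ∧
      molEval f x z > 1 - (δ * dist u v + ε * dist u v) / r := by
  have hd : 0 < dist u v := by linarith
  obtain ⟨γ, hγ, hfin, hlen⟩ := hM u v (δ * dist u v) (mul_pos hδ hd)
  obtain ⟨t, ht, htr⟩ := hγ.exists_dist_eq ⟨hr.le, by linarith⟩
  have hchords := dist_add_dist_le_pathLength hfin ht
  rw [hγ.2.1, hγ.2.2] at hchords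
  have hfuv' : (1 - ε) * dist u v < f u - f v := (lt_div_iff₀ hd).1 hfuv
  have hut : u ≠ γ t := dist_pos.1 (htr ▸ hr)
  refine ⟨u, γ t, γ, hγ, hfin, by linarith, ⟨0, left_mem_Icc.2 zero_le_one, hγ.2.1⟩,
    mem_image_of_mem γ ht, htr, ?_⟩
  calc 1 - (δ * dist u v + ε * dist u v) / r
      < 1 - (r + dist (γ t) v - (f u - f v)) / r := by gcongr; linarith
    _ ≤ molEval f u (γ t) := htr ▸ one_sub_div_le_molEval hf hut v

theorem exists_norming_pair_at_scale {M : Type*} [MetricSpace M]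
    (hM : IsLengthSpace M) (f : M → ℝ) (hf : LipschitzWith 1 f)
    (ε : ℝ) (hε : 0 < ε) (u v : M) (huv : u ≠ v)
    (hfuv : molEval f u v > 1 - ε) (r : ℝ) (hr : 0 < r) (hr2 : r < dist u v / 2)
    (δ : ℝ) (hδ : 0 < δ) :
    ∃ (x z : M) (γ : ℝ → M), IsPathFrom γ u v ∧ FiniteLength γ ∧
      pathLength γ < (1 + δ) * dist u v ∧
      x ∈ γ '' Set.Icc (0:ℝ) 1 ∧ z ∈ γ '' Set.Icc (0:ℝ) 1 ∧ dist x z = r ∧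
      molEval f x z > 1 - (δ * dist u v + ε * dist u v) / r :=
  exists_norming_pair_at_scale_general hM f hf ε u v hfuv r hr hr2 δ hδ
end

section
/- Let M be a length space, n a positive integer, f₁,…,fₙ : M → ℝ 1-Lipschitz functions, and α > 0. Suppose for each i there exist uᵢ ≠ vᵢ with (fᵢ uᵢ - fᵢ vᵢ)/d(uᵢ,vᵢ) > 1 - α/(18n). Then there exist points x₁,…,xₙ, z₁,…,zₙ, w₁,…,wₙ, y₁,…,yₙ in M and positive reals r₁,…,rₙ such that for each i: d(xᵢ,zᵢ) = d(yᵢ,wᵢ) = rᵢ, (fᵢ xᵢ - fᵢ zᵢ)/d(xᵢ,zᵢ) > 1 - α, (fᵢ wᵢ - fᵢ yᵢ)/d(wᵢ,yᵢ) > 1 - α, and the 2n open balls B(xᵢ, rᵢ), B(yᵢ, rᵢ) are pairwise disjoint. -/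
open Set Metric

open scoped Finset

/-!
Along a nearly geodesic path from `uᵢ` to `vᵢ`, mark the first times at which `fᵢ` has dropped by
`2r, 4r, …`. Each piece between consecutive marks has length at least `2r`, and the total excess of
these lengths over `2r` is bounded by the defect `d(uᵢ, vᵢ) - (fᵢ uᵢ - fᵢ vᵢ)` plus the slack of the
path. Hence most pieces are almost geodesic with `fᵢ` almost isometric on them, and the start of such
a piece together with the point at distance `r` from it along the piece is an almost norming pair.
Only boundedly many pieces start within `3r` (in the values of `fᵢ`) of a previously chosen centre,
so a good piece avoiding them exists; since `fᵢ` is `1`-Lipschitz, a gap of `2r` between values of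
`fᵢ` makes the balls of radius `r` disjoint. Choosing the pairs greedily, index by index, gives all
the disjoint balls.
-/

theorem Finset.card_le_of_forall_lt_add {S : Finset ℕ} {m : ℕ}
    (h : ∀ j ∈ S, ∀ k ∈ S, k < j + m) : #S ≤ m := by
  rcases S.eq_empty_or_nonempty with rfl | hS
  · simp
  calc #S ≤ #(Finset.Ico (S.min' hS) (S.min' hS + m)) :=
        Finset.card_le_card fun k hk =>
          Finset.mem_Ico.2 ⟨S.min'_le k hk, h _ (S.min'_mem hS) k hk⟩
    _ = m := by simp

theorem Fin.exists_seq_of_forall_finset_exists {β : Type*} {N : ℕ} (P : Fin N → β → Prop)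
    (R : Fin N → β → β → Prop)
    (h : ∀ i : Fin N, ∀ B : Finset β, #B ≤ i → ∃ b, P i b ∧ ∀ b' ∈ B, R i b b') :
    ∃ b : Fin N → β, ∀ i, P i (b i) ∧ ∀ j < i, R i (b i) (b j) := by
  classical
  induction N with
  | zero => exact ⟨Fin.elim0, fun i => i.elim0⟩
  | succ N ih =>
    obtain ⟨b, hb⟩ := ih (fun i => P i.castSucc) (fun i => R i.castSucc)
      fun i B hB => h i.castSucc B hB
    obtain ⟨b₀, hPb₀, hRb₀⟩ := h (Fin.last N) (Finset.univ.image b)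
      (Finset.card_image_le.trans (by simp))
    refine ⟨Fin.snoc b b₀, Fin.lastCases ?_ fun i => ?_⟩
    · refine ⟨by simpa using hPb₀, fun j hj => ?_⟩
      obtain ⟨j, rfl⟩ := Fin.exists_castSucc_eq.2 hj.ne
      simpa using hRb₀ (b j) (Finset.mem_image_of_mem b (Finset.mem_univ j))
    · refine ⟨by simpa using (hb i).1, fun j hj => ?_⟩
      obtain ⟨j, rfl⟩ := Fin.exists_castSucc_eq.2 (hj.trans (Fin.castSucc_lt_last i)).ne
      simpa using (hb i).2 j (Fin.castSucc_lt_castSucc_iff.1 hj)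

section Lipschitz

variable {M : Type*} [MetricSpace M] {f : M → ℝ}

theorem LipschitzWith.abs_sub_le_dist (hf : LipschitzWith 1 f) (x y : M) :
    |f x - f y| ≤ dist x y := by
  simpa [Real.dist_eq] using hf.dist_le_mul x y

theorem LipschitzWith.sub_le_dist (hf : LipschitzWith 1 f) (x y : M) : f x - f y ≤ dist x y :=
  (le_abs_self _).trans (hf.abs_sub_le_dist x y)

theorem LipschitzWith.disjoint_ball (hf : LipschitzWith 1 f) {x y : M} {r s : ℝ}
    (h : r + s ≤ |f x - f y|) : Disjoint (ball x r) (ball y s) := by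
  refine Set.disjoint_left.2 fun p hpx hpy => ?_
  linarith [abs_sub_le (f x) (f p) (f y), hf.abs_sub_le_dist x p, hf.abs_sub_le_dist p y,
    dist_comm x p, mem_ball.1 hpx, mem_ball.1 hpy]

theorem LipschitzWith.neg_one_le_molEval (hf : LipschitzWith 1 f) {x y : M} (hxy : x ≠ y) :
    -1 ≤ molEval f x y := by
  rw [molEval, le_div_iff₀ (dist_pos.2 hxy), dist_comm]
  linarith [hf.sub_le_dist y x]

end Lipschitz

noncomputable def firstHit (h : ℝ → ℝ) (c : ℝ) : ℝ := sInf (Icc 0 1 ∩ h ⁻¹' Iic c)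

section FirstHit

variable {h : ℝ → ℝ} {c : ℝ}

theorem firstHit_mem (hh : ContinuousOn h (Icc 0 1)) (hc : h 1 ≤ c) :
    firstHit h c ∈ Icc 0 1 ∩ h ⁻¹' Iic c :=
  (hh.preimage_isClosed_of_isClosed isClosed_Icc isClosed_Iic).csInf_mem
    ⟨1, right_mem_Icc.2 zero_le_one, hc⟩ ⟨0, fun _ ht => ht.1.1⟩

theorem firstHit_anti {c' : ℝ} (hc' : h 1 ≤ c') (hcc' : c' ≤ c) : firstHit h c ≤ firstHit h c' :=
  csInf_le_csInf ⟨0, fun _ ht => ht.1.1⟩ ⟨1, right_mem_Icc.2 zero_le_one, hc'⟩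
    fun _ ht => ⟨ht.1, le_trans ht.2 hcc'⟩

theorem apply_firstHit (hh : ContinuousOn h (Icc 0 1)) (h1 : h 1 ≤ c) (h0 : c ≤ h 0) :
    h (firstHit h c) = c := by
  obtain ⟨⟨ht0, ht1⟩, hle⟩ := firstHit_mem hh h1
  obtain ⟨θ, hθ, hθc⟩ := intermediate_value_Icc' ht0 (hh.mono (Icc_subset_Icc le_rfl ht1))
    ⟨hle, h0⟩
  have : firstHit h c ≤ θ := csInf_le ⟨0, fun _ ht => ht.1.1⟩
    ⟨⟨hθ.1, hθ.2.trans ht1⟩, le_of_eq hθc⟩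
  rwa [le_antisymm hθ.2 this] at hθc

end FirstHit

section Variation

variable {M : Type*} [MetricSpace M] {γ : ℝ → M} {a b : ℝ}

theorem exists_mem_Icc_dist_eq (hab : a ≤ b) (hγ : ContinuousOn γ (Icc a b)) {ρ : ℝ}
    (hρ : ρ ∈ Icc 0 (dist (γ a) (γ b))) : ∃ θ ∈ Icc a b, dist (γ a) (γ θ) = ρ := by
  rw [← dist_self (γ a)] at hρ
  exact intermediate_value_Icc hab ((continuous_const.dist continuous_id).comp_continuousOn hγ) hρ

theorem dist_add_dist_le_eVariationOn {θ : ℝ} (hθ : θ ∈ Icc a b)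
    (hfin : eVariationOn γ (Icc a b) ≠ ⊤) :
    dist (γ a) (γ θ) + dist (γ θ) (γ b) ≤ (eVariationOn γ (Icc a b)).toReal := by
  have hsplit := eVariationOn.Icc_add_Icc γ (s := univ) hθ.1 hθ.2 (mem_univ θ)
  simp only [univ_inter] at hsplit
  rw [← hsplit] at hfin ⊢
  obtain ⟨hfin₁, hfin₂⟩ := ENNReal.add_ne_top.1 hfin
  rw [ENNReal.toReal_add hfin₁ hfin₂, dist_edist, dist_edist]
  exact add_le_add
    (ENNReal.toReal_mono hfin₁ (eVariationOn.edist_le γ (left_mem_Icc.2 hθ.1) (by simp [hθ.1])))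
    (ENNReal.toReal_mono hfin₂ (eVariationOn.edist_le γ (left_mem_Icc.2 hθ.2) (by simp [hθ.2])))

theorem sum_toReal_eVariationOn_le_pathLength (hγ : FiniteLength γ) {t : ℕ → ℝ}
    (ht : Monotone t) (ht01 : ∀ k, t k ∈ Icc 0 1) (K : ℕ) :
    ∑ k ∈ Finset.range K, (eVariationOn γ (Icc (t k) (t (k + 1)))).toReal ≤ pathLength γ := by
  have hsub : ∀ k l, Icc (t k) (t l) ⊆ Icc 0 1 := fun k l =>
    Icc_subset_Icc (ht01 k).1 (ht01 l).2
  rw [← ENNReal.toReal_sum fun k _ => ne_top_of_le_ne_top hγ (eVariationOn.mono γ (hsub _ _)),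
    eVariationOn.sum' γ ht]
  exact ENNReal.toReal_mono hγ (eVariationOn.mono γ (hsub _ _))

end Variation

theorem card_filter_abs_sub_lt_le (K : ℕ) {r : ℝ} (hr : 0 < r) (c₀ c : ℝ) :
    #{k ∈ Finset.range K | |c₀ - 2 * r * (k : ℕ) - c| < 3 * r} ≤ 3 := by
  refine Finset.card_le_of_forall_lt_add fun j hj k hk => ?_
  rw [Finset.mem_filter] at hj hk
  have hkj : 2 * r * ((k : ℝ) - j) < 2 * r * 3 := by
    linarith [(abs_lt.1 hj.2).2, (abs_lt.1 hk.2).1]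
  have : (k : ℝ) < j + 3 := by linarith [lt_of_mul_lt_mul_left hkj (by positivity : 0 ≤ 2 * r)]
  exact_mod_cast this

theorem exists_short_unblocked_index {K : ℕ} {L : ℕ → ℝ} {r ε : ℝ} (c₀ : ℝ) (F : Finset ℝ)
    (hr : 0 < r) (hε : 0 < ε) (hL : ∀ k < K, 2 * r ≤ L k)
    (hsum : ∑ k ∈ Finset.range K, L k < 2 * r * K + (K - 3 * #F) * ε) :
    ∃ k < K, L k < 2 * r + ε ∧ ∀ c ∈ F, 3 * r ≤ |c₀ - 2 * r * k - c| := by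
  by_contra! hnone
  set long := {k ∈ Finset.range K | 2 * r + ε ≤ L k}
  set blocked := F.biUnion fun c => {k ∈ Finset.range K | |c₀ - 2 * r * (k : ℕ) - c| < 3 * r}
  have hcover : Finset.range K ⊆ long ∪ blocked := by
    intro k hk
    by_cases hLk : 2 * r + ε ≤ L k
    · exact Finset.mem_union_left _ (Finset.mem_filter.2 ⟨hk, hLk⟩)
    obtain ⟨c, hc, hck⟩ := hnone k (Finset.mem_range.1 hk) (not_le.1 hLk)
    exact Finset.mem_union_right _ (Finset.mem_biUnion.2 ⟨c, hc, Finset.mem_filter.2 ⟨hk, hck⟩⟩)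
  have hlong : #long * ε ≤ ∑ k ∈ Finset.range K, L k - 2 * r * K := by
    calc #long * ε = #long • ε := (nsmul_eq_mul _ _).symm
      _ ≤ ∑ k ∈ long, (L k - 2 * r) :=
        Finset.card_nsmul_le_sum _ _ _ fun k hk => by linarith [(Finset.mem_filter.1 hk).2]
      _ ≤ ∑ k ∈ Finset.range K, (L k - 2 * r) :=
        Finset.sum_le_sum_of_subset_of_nonneg (Finset.filter_subset _ _)
          fun k hk _ => by linarith [hL k (Finset.mem_range.1 hk)]
      _ = ∑ k ∈ Finset.range K, L k - 2 * r * K := by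
        rw [Finset.sum_sub_distrib, Finset.sum_const, Finset.card_range, nsmul_eq_mul]; ring
  have hblocked : #blocked ≤ #F * 3 :=
    Finset.card_biUnion_le_card_mul _ _ _ fun c _ => card_filter_abs_sub_lt_le K hr c₀ c
  have hK : (K : ℝ) ≤ #long + #F * 3 := by
    have := (Finset.card_le_card hcover).trans (Finset.card_union_le long blocked)
    rw [Finset.card_range] at this
    exact_mod_cast this.trans (by omega)
  linarith [mul_le_mul_of_nonneg_right hK hε.le]

theorem exists_pair_avoiding_of_path {M : Type*} [MetricSpace M] {f : M → ℝ}
    (hf : LipschitzWith 1 f) {γ : ℝ → M} {u v : M} (hγ : IsPathFrom γ u v)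
    (hγfin : FiniteLength γ) {r ε : ℝ} (hr : 0 < r) (hε : 0 < ε) (K : ℕ) (F : Finset ℝ)
    (hK : 2 * r * K ≤ f u - f v) (hroom : pathLength γ < 2 * r * K + (K - 3 * #F) * ε) :
    ∃ p q, dist p q = r ∧ r - ε ≤ f p - f q ∧
      ∀ c ∈ F, 2 * r ≤ |f p - c| ∧ 2 * r ≤ |f q - c| := by
  obtain ⟨hγc, rfl, rfl⟩ := hγ
  have hh : ContinuousOn (f ∘ γ) (Icc 0 1) := hf.continuous.comp_continuousOn hγc
  -- clamping the levels at `f (γ 1)` keeps them reachable, so that `t` is monotone beyond `K`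
  set t : ℕ → ℝ := fun k => firstHit (f ∘ γ) (max (f (γ 0) - 2 * r * k) (f (γ 1)))
  have ht01 : ∀ k, t k ∈ Icc 0 1 := fun k => (firstHit_mem hh (le_max_right _ _)).1
  have ht : Monotone t := fun j k hjk =>
    firstHit_anti (le_max_right _ _) (max_le_max (by gcongr) le_rfl)
  have hlevel : ∀ k ≤ K, f (γ (t k)) = f (γ 0) - 2 * r * k := by
    intro k hk
    have hkK : 2 * r * k ≤ 2 * r * K := by gcongr
    have hmax : max (f (γ 0) - 2 * r * k) (f (γ 1)) = f (γ 0) - 2 * r * k :=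
      max_eq_left (by linarith)
    have := apply_firstHit hh (le_max_right (f (γ 0) - 2 * r * k) (f (γ 1)))
      (by rw [hmax]; simp only [Function.comp_apply]; linarith [mul_nonneg hr.le k.cast_nonneg])
    simpa only [t, hmax, Function.comp_apply] using this
  have hsub : ∀ k, Icc (t k) (t (k + 1)) ⊆ Icc 0 1 := fun k =>
    Icc_subset_Icc (ht01 k).1 (ht01 (k + 1)).2
  have hLfin : ∀ k, eVariationOn γ (Icc (t k) (t (k + 1))) ≠ ⊤ := fun k =>
    ne_top_of_le_ne_top hγfin (eVariationOn.mono γ (hsub k))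
  have hdrop : ∀ k < K, 2 * r ≤ dist (γ (t k)) (γ (t (k + 1))) := by
    intro k hk
    have := hf.sub_le_dist (γ (t k)) (γ (t (k + 1)))
    rw [hlevel k hk.le, hlevel (k + 1) hk] at this
    push_cast at this
    linarith
  have hL : ∀ k < K, 2 * r ≤ (eVariationOn γ (Icc (t k) (t (k + 1)))).toReal := fun k hk => by
    have := dist_add_dist_le_eVariationOn (right_mem_Icc.2 (ht k.le_succ)) (hLfin k)
    rw [dist_self] at this
    linarith [hdrop k hk]
  obtain ⟨k, hk, hLk, havoid⟩ := exists_short_unblocked_index (f (γ 0)) F hr hε hL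
    (hroom.trans_le' (sum_toReal_eVariationOn_le_pathLength hγfin ht ht01 K))
  obtain ⟨θ, hθ, hθr⟩ := exists_mem_Icc_dist_eq (ht k.le_succ) (hγc.mono (hsub k))
    ⟨hr.le, by linarith [hdrop k hk]⟩
  have hpath := dist_add_dist_le_eVariationOn hθ (hLfin k)
  have hpq := hf.abs_sub_le_dist (γ (t k)) (γ θ)
  refine ⟨γ (t k), γ θ, hθr, ?_, fun c hc => ?_⟩
  · have := hf.sub_le_dist (γ θ) (γ (t (k + 1)))
    have hdrop' := hlevel (k + 1) hk
    rw [hlevel k hk.le]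
    push_cast at hdrop'
    linarith
  · have hc' := havoid c hc
    rw [← hlevel k hk.le] at hc'
    refine ⟨by linarith, ?_⟩
    linarith [abs_sub_le (f (γ (t k))) (f (γ θ)) c]

theorem exists_norming_pair_avoiding {M : Type*} [MetricSpace M] (hM : IsLengthSpace M)
    {f : M → ℝ} (hf : LipschitzWith 1 f) {u v : M} (huv : u ≠ v) {a r : ℝ} (ha : 0 < a)
    (ha1 : a ≤ 1) (hr : 0 < r) (hnorm : 1 - a / 9 ≤ molEval f u v) (F : Finset ℝ)
    (hF : 18 * (#F + 2) * r ≤ a * dist u v) :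
    ∃ p q, dist p q = r ∧ 1 - a < molEval f p q ∧
      ∀ c ∈ F, 2 * r ≤ |f p - c| ∧ 2 * r ≤ |f q - c| := by
  have hd := dist_pos.2 huv
  have hT : (1 - a / 9) * dist u v ≤ f u - f v := by
    rwa [molEval, le_div_iff₀ hd] at hnorm
  obtain ⟨γ, hγ, hγfin, hlen⟩ := hM u v r hr
  set K := ⌊(f u - f v) / (2 * r)⌋₊
  have hKle : 2 * r * K ≤ f u - f v :=
    (le_div_iff₀' (by positivity)).1 (Nat.floor_le (div_nonneg (by nlinarith) (by positivity)))
  have hKgt : f u - f v < 2 * r * (K + 1) :=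
    (div_lt_iff₀' (by positivity)).1 (Nat.lt_floor_add_one _)
  obtain ⟨p, q, hpq, hdrop, havoid⟩ :=
    exists_pair_avoiding_of_path hf hγ hγfin hr (by positivity : 0 < a * r / 2) K F hKle (by
      -- the room comes from `(1 - a/9) (1 + a/4) ≥ 1 + a/9`, valid for `a ≤ 1`
      have hgain : (1 + a / 9) * dist u v ≤ (1 + a / 4) * (f u - f v) := by
        nlinarith [mul_nonneg (mul_nonneg ha.le (sub_nonneg.2 ha1)) hd.le]
      have har : a * r ≤ r := mul_le_of_le_one_left hr.le ha1
      have hFr : 0 ≤ (#F : ℝ) * r := by positivity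
      have haFr : a * (#F * r) ≤ #F * r := mul_le_of_le_one_left hFr ha1
      linarith [mul_lt_mul_of_pos_left hKgt ha])
  refine ⟨p, q, hpq, ?_, havoid⟩
  rw [molEval, hpq, lt_div_iff₀ hr]
  linarith [mul_pos ha hr]

theorem exists_two_norming_pairs_avoiding {M : Type*} [MetricSpace M] (hM : IsLengthSpace M)
    {f : M → ℝ} (hf : LipschitzWith 1 f) {u v : M} (huv : u ≠ v) {a r : ℝ} (ha : 0 < a)
    (ha1 : a ≤ 1) (hr : 0 < r) (hnorm : 1 - a / 9 ≤ molEval f u v) (F : Finset ℝ)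
    (hF : 18 * (#F + 3) * r ≤ a * dist u v) :
    ∃ x z w y, dist x z = r ∧ dist y w = r ∧ 1 - a < molEval f x z ∧ 1 - a < molEval f w y ∧
      2 * r ≤ |f x - f y| ∧ ∀ c ∈ F, 2 * r ≤ |f x - c| ∧ 2 * r ≤ |f y - c| := by
  obtain ⟨x, z, hxz, hmxz, hxF⟩ :=
    exists_norming_pair_avoiding hM hf huv ha ha1 hr hnorm F (hF.trans' (by gcongr; norm_num))
  have hcard : (#(insert (f x) F) : ℝ) + 2 ≤ #F + 3 := by
    have : #(insert (f x) F) ≤ #F + 1 := Finset.card_insert_le _ _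
    exact_mod_cast (by omega : #(insert (f x) F) + 2 ≤ #F + 3)
  obtain ⟨w, y, hwy, hmwy, hyF⟩ :=
    exists_norming_pair_avoiding hM hf huv ha ha1 hr hnorm (insert (f x) F)
      (hF.trans' (by gcongr))
  refine ⟨x, z, w, y, hxz, dist_comm y w ▸ hwy, hmxz, hmwy, ?_, fun c hc => ⟨(hxF c hc).1, ?_⟩⟩
  · rw [abs_sub_comm]
    exact (hyF (f x) (Finset.mem_insert_self _ _)).2
  · exact (hyF c (Finset.mem_insert_of_mem hc)).2

theorem exists_separated_norming_pairs_of_norming {M : Type*} [MetricSpace M]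
    (hM : IsLengthSpace M) {n : ℕ} (g : Fin n → M → ℝ) (hg : ∀ i, LipschitzWith 1 (g i))
    {a : ℝ} (ha : 0 < a) (ha1 : a ≤ 1) (u v : Fin n → M) (huv : ∀ i, u i ≠ v i)
    (hnorm : ∀ i, 1 - a / 9 ≤ molEval (g i) (u i) (v i)) :
    ∃ (x z w y : Fin n → M) (r : ℝ), 0 < r ∧
      (∀ i, dist (x i) (z i) = r ∧ dist (y i) (w i) = r ∧
        1 - a < molEval (g i) (x i) (z i) ∧ 1 - a < molEval (g i) (w i) (y i)) ∧
      (∀ i j, i ≠ j → Disjoint (ball (x i) r) (ball (x j) r)) ∧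
      (∀ i j, i ≠ j → Disjoint (ball (y i) r) (ball (y j) r)) ∧
      (∀ i j, Disjoint (ball (x i) r) (ball (y j) r)) := by
  obtain ⟨D, hD, hDle⟩ := Pi.exists_forall_pos_add_lt (x := 0) fun i => dist_pos.2 (huv i)
  set r := a * D / (18 * (2 * n + 3))
  have hr : 0 < r := by positivity
  -- `b i = ((x i, z i), (w i, y i))`
  obtain ⟨b, hb⟩ := Fin.exists_seq_of_forall_finset_exists
    (fun i (b : (M × M) × (M × M)) => dist b.1.1 b.1.2 = r ∧ dist b.2.2 b.2.1 = r ∧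
      1 - a < molEval (g i) b.1.1 b.1.2 ∧ 1 - a < molEval (g i) b.2.1 b.2.2 ∧
      Disjoint (ball b.1.1 r) (ball b.2.2 r))
    (fun _ b b' => Disjoint (ball b.1.1 r) (ball b'.1.1 r) ∧
      Disjoint (ball b.1.1 r) (ball b'.2.2 r) ∧ Disjoint (ball b.2.2 r) (ball b'.1.1 r) ∧
      Disjoint (ball b.2.2 r) (ball b'.2.2 r))
    fun i B hB => by
      set F := B.image (fun b => g i b.1.1) ∪ B.image (fun b => g i b.2.2)
      have hF : (#F : ℝ) ≤ 2 * n := by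
        have hFB : #F ≤ #B + #B := (Finset.card_union_le _ _).trans
          (add_le_add Finset.card_image_le Finset.card_image_le)
        have := i.isLt
        exact_mod_cast (by omega : #F ≤ 2 * n)
      obtain ⟨x, z, w, y, hxz, hyw, hmxz, hmwy, hxy, hxyF⟩ :=
        exists_two_norming_pairs_avoiding hM (hg i) (huv i) ha ha1 hr (hnorm i) F <| by
          calc 18 * (#F + 3) * r ≤ 18 * (2 * n + 3) * r := by gcongr
            _ = a * D := by simp only [r]; field_simp
            _ ≤ a * dist (u i) (v i) := by gcongr; simpa using (hDle i).le
      refine ⟨((x, z), (w, y)), ⟨hxz, hyw, hmxz, hmwy, (hg i).disjoint_ball (by linarith)⟩,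
        fun b' hb' => ?_⟩
      obtain ⟨hx₁, hy₁⟩ := hxyF _ (Finset.mem_union_left _ (Finset.mem_image_of_mem _ hb'))
      obtain ⟨hx₂, hy₂⟩ := hxyF _ (Finset.mem_union_right _ (Finset.mem_image_of_mem _ hb'))
      exact ⟨(hg i).disjoint_ball (by linarith), (hg i).disjoint_ball (by linarith),
        (hg i).disjoint_ball (by linarith), (hg i).disjoint_ball (by linarith)⟩
  refine ⟨fun i => (b i).1.1, fun i => (b i).1.2, fun i => (b i).2.1, fun i => (b i).2.2, r, hr,
    fun i => ⟨(hb i).1.1, (hb i).1.2.1, (hb i).1.2.2.1, (hb i).1.2.2.2.1⟩, ?_, ?_, ?_⟩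
  · intro i j hij
    rcases hij.lt_or_gt with h | h
    exacts [((hb j).2 i h).1.symm, ((hb i).2 j h).1]
  · intro i j hij
    rcases hij.lt_or_gt with h | h
    exacts [((hb j).2 i h).2.2.2.symm, ((hb i).2 j h).2.2.2]
  · intro i j
    rcases lt_trichotomy i j with h | rfl | h
    exacts [((hb j).2 i h).2.2.1.symm, (hb i).1.2.2.2.2, ((hb i).2 j h).2.1]

theorem exists_separated_norming_pairs_general {M : Type*} [MetricSpace M]
    (hM : IsLengthSpace M) (n : ℕ)
    (f : Fin n → M → ℝ) (hf : ∀ i, LipschitzWith 1 (f i)) (α : ℝ) (hα : 0 < α)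
    (u v : Fin n → M) (huv : ∀ i, u i ≠ v i)
    (hnorm : ∀ i, molEval (f i) (u i) (v i) > 1 - α / (18 * n)) :
    ∃ (x z w y : Fin n → M) (r : Fin n → ℝ),
      (∀ i, 0 < r i ∧ dist (x i) (z i) = r i ∧ dist (y i) (w i) = r i ∧
        molEval (f i) (x i) (z i) > 1 - α ∧ molEval (f i) (w i) (y i) > 1 - α) ∧
      (∀ i j, i ≠ j → Disjoint (ball (x i) (r i)) (ball (x j) (r j))) ∧
      (∀ i j, i ≠ j → Disjoint (ball (y i) (r i)) (ball (y j) (r j))) ∧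
      (∀ i j, Disjoint (ball (x i) (r i)) (ball (y j) (r j))) := by
  obtain ⟨g, a, hg, ha, ha1, hgnorm, htransfer⟩ : ∃ (g : Fin n → M → ℝ) (a : ℝ),
      (∀ i, LipschitzWith 1 (g i)) ∧ 0 < a ∧ a ≤ 1 ∧
      (∀ i, 1 - a / 9 ≤ molEval (g i) (u i) (v i)) ∧
      ∀ i x z, x ≠ z → 1 - a < molEval (g i) x z → 1 - α < molEval (f i) x z := by
    rcases le_or_gt α 2 with hα2 | hα2
    · refine ⟨f, min α 1, hf, lt_min hα one_pos, min_le_right _ _, fun i => ?_,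
        fun i x z _ h => by linarith [min_le_left α 1]⟩
      have hn : (1 : ℝ) ≤ n := by exact_mod_cast i.pos
      have : α / (18 * n) ≤ min α 1 / 9 := by
        rw [div_le_div_iff₀ (by positivity) (by norm_num)]
        rcases min_choice α 1 with h | h <;> rw [h] <;> nlinarith
      linarith [hnorm i]
    -- for `α > 2` every molecule norms `f i` well enough, so distance functions can stand in
    · refine ⟨fun i m => dist m (v i), 1, fun i => LipschitzWith.dist_left (v i), one_pos, le_rfl,
        fun i => ?_, fun i x z hxz _ => by linarith [(hf i).neg_one_le_molEval hxz]⟩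
      simp only [molEval, dist_self, sub_zero, div_self (dist_ne_zero.2 (huv i))]
      norm_num
  obtain ⟨x, z, w, y, r, hr, hpairs, hxx, hyy, hxy⟩ :=
    exists_separated_norming_pairs_of_norming hM g hg ha ha1 u v huv hgnorm
  refine ⟨x, z, w, y, fun _ => r, fun i => ?_, hxx, hyy, hxy⟩
  obtain ⟨hxz, hyw, hmxz, hmwy⟩ := hpairs i
  exact ⟨hr, hxz, hyw, htransfer i _ _ (dist_pos.1 (hxz ▸ hr)) hmxz,
    htransfer i _ _ (dist_pos.1 (hyw ▸ hr)).symm hmwy⟩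

/-- The combinatorial core of Theorem 2.2. -/
theorem exists_separated_norming_pairs {M : Type*} [MetricSpace M]
    (hM : IsLengthSpace M) (n : ℕ) (hn : 0 < n)
    (f : Fin n → M → ℝ) (hf : ∀ i, LipschitzWith 1 (f i)) (α : ℝ) (hα : 0 < α)
    (u v : Fin n → M) (huv : ∀ i, u i ≠ v i)
    (hnorm : ∀ i, molEval (f i) (u i) (v i) > 1 - α / (18 * n)) :
    ∃ (x z w y : Fin n → M) (r : Fin n → ℝ),
      (∀ i, 0 < r i ∧ dist (x i) (z i) = r i ∧ dist (y i) (w i) = r i ∧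
        molEval (f i) (x i) (z i) > 1 - α ∧ molEval (f i) (w i) (y i) > 1 - α) ∧
      (∀ i j, i ≠ j → Disjoint (ball (x i) (r i)) (ball (x j) (r j))) ∧
      (∀ i j, i ≠ j → Disjoint (ball (y i) (r i)) (ball (y j) (r j))) ∧
      (∀ i j, Disjoint (ball (x i) (r i)) (ball (y j) (r j))) :=
  exists_separated_norming_pairs_general hM n f hf α hα u v huv hnorm
end

section
/- Let M be a length space, u ≠ v ∈ M, n a positive integer, r = d(u,v)/(9n), and γ a path from u to v with L(γ) < (1+1/(18n))·d(u,v). If w is a point on γ with d(w, v) ≥ 2r (respectively d(w,u) ≥ 2r), then there exists a point z on γ with d(w,z) = r and d(z,v) < d(w,v) (respectively d(z,u) < d(w,u)). -/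
open Set Metric

namespace eVariationOn

variable {α E : Type*} [LinearOrder α] [PseudoEMetricSpace E] (f : α → E) {s : Set α}

theorem inter_Iic_add_inter_Ici_le (b : α) :
    eVariationOn f (s ∩ Iic b) + eVariationOn f (s ∩ Ici b) ≤ eVariationOn f s :=
  (add_le_union f fun _ hx _ hy => hx.2.trans hy.2).trans
    (eVariationOn.mono f (union_subset inter_subset_left inter_subset_left))

theorem edist_add_edist_le {a b c : α} (ha : a ∈ s) (hb : b ∈ s) (hc : c ∈ s)
    (hab : a ≤ b) (hbc : b ≤ c) :
    edist (f a) (f b) + edist (f b) (f c) ≤ eVariationOn f s :=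
  (add_le_add (edist_le f (s := s ∩ Iic b) ⟨ha, hab⟩ ⟨hb, le_rfl⟩)
    (edist_le f (s := s ∩ Ici b) ⟨hb, le_rfl⟩ ⟨hc, hbc⟩)).trans
    (inter_Iic_add_inter_Ici_le f b)

theorem edist_add_edist_add_edist_le {a b c d : α} (ha : a ∈ s) (hb : b ∈ s) (hc : c ∈ s)
    (hd : d ∈ s) (hab : a ≤ b) (hbc : b ≤ c) (hcd : c ≤ d) :
    edist (f a) (f b) + edist (f b) (f c) + edist (f c) (f d) ≤ eVariationOn f s :=
  calc edist (f a) (f b) + edist (f b) (f c) + edist (f c) (f d)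
      = edist (f a) (f b) + (edist (f b) (f c) + edist (f c) (f d)) := add_assoc _ _ _
    _ ≤ eVariationOn f (s ∩ Iic b) + eVariationOn f (s ∩ Ici b) :=
      add_le_add (edist_le f (s := s ∩ Iic b) ⟨ha, hab⟩ ⟨hb, le_rfl⟩)
        (edist_add_edist_le f ⟨hb, le_rfl⟩ ⟨hc, hbc⟩ ⟨hd, hbc.trans hcd⟩ hbc hcd)
    _ ≤ eVariationOn f s := inter_Iic_add_inter_Ici_le f b

end eVariationOn

theorem image_comp_one_sub_Icc {α : Type*} (γ : ℝ → α) :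
    (fun t => γ (1 - t)) '' Icc 0 1 = γ '' Icc 0 1 := by
  rw [← image_image γ (fun t : ℝ => 1 - t), image_const_sub_Icc]
  norm_num

section PathLength

variable {M : Type*} [MetricSpace M] {γ : ℝ → M}

theorem dist_add_dist_add_dist_le_pathLength (hfin : FiniteLength γ) {a b : ℝ}
    (ha : 0 ≤ a) (hab : a ≤ b) (hb : b ≤ 1) :
    dist (γ 0) (γ a) + dist (γ a) (γ b) + dist (γ b) (γ 1) ≤ pathLength γ := by
  have h := ENNReal.toReal_mono hfin <|
    eVariationOn.edist_add_edist_add_edist_le γ (left_mem_Icc.2 zero_le_one) ⟨ha, hab.trans hb⟩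
      ⟨ha.trans hab, hb⟩ (right_mem_Icc.2 zero_le_one) ha hab hb
  simpa [pathLength, dist_edist, ENNReal.toReal_add, edist_ne_top] using h

theorem eVariationOn_comp_one_sub_Icc :
    eVariationOn (fun t => γ (1 - t)) (Icc 0 1) = eVariationOn γ (Icc 0 1) := by
  have h := eVariationOn.comp_eq_of_antitoneOn γ (t := Icc (0 : ℝ) 1) (fun t => 1 - t)
    fun _ _ _ _ hxy => sub_le_sub_left hxy 1
  simpa [Function.comp_def, image_const_sub_Icc] using h

theorem pathLength_comp_one_sub : pathLength (fun t => γ (1 - t)) = pathLength γ := by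
  rw [pathLength, pathLength, eVariationOn_comp_one_sub_Icc]

theorem FiniteLength.comp_one_sub (hfin : FiniteLength γ) :
    FiniteLength (fun t => γ (1 - t)) := by
  rwa [FiniteLength, eVariationOn_comp_one_sub_Icc]

theorem IsPathFrom.comp_one_sub {p q : M} (hγ : IsPathFrom γ p q) :
    IsPathFrom (fun t => γ (1 - t)) q p := by
  obtain ⟨hcont, h0, h1⟩ := hγ
  refine ⟨hcont.comp (by fun_prop) fun t ht => ⟨by linarith [ht.2], by linarith [ht.1]⟩, ?_, ?_⟩
  · simpa using h1
  · simpa using h0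

/-- The chords `u → w → z → v` give `d(u, w) + r + d(z, v) ≤ L(γ) < d(u, v) + r`, and
`d(u, v) ≤ d(u, w) + d(w, v)`. -/
theorem exists_dist_eq_dist_lt_of_pathLength_lt {u v w : M} {r : ℝ} (hγ : IsPathFrom γ u v)
    (hfin : FiniteLength γ) (hw : w ∈ γ '' Icc 0 1) (hr : 0 ≤ r) (hrw : r ≤ dist w v)
    (hL : pathLength γ < dist u v + r) :
    ∃ z ∈ γ '' Icc 0 1, dist w z = r ∧ dist z v < dist w v := by
  obtain ⟨hcont, rfl, rfl⟩ := hγ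
  obtain ⟨t₀, ht₀, rfl⟩ := hw
  have hcont' : ContinuousOn (fun t => dist (γ t₀) (γ t)) (Icc t₀ 1) :=
    (continuous_const.dist continuous_id).comp_continuousOn
      (hcont.mono (Icc_subset_Icc ht₀.1 le_rfl))
  obtain ⟨t, ht, hdist⟩ := intermediate_value_Icc ht₀.2 hcont' ⟨by simpa using hr, hrw⟩
  refine ⟨γ t, mem_image_of_mem γ ⟨ht₀.1.trans ht.1, ht.2⟩, hdist, ?_⟩
  have hchords := dist_add_dist_add_dist_le_pathLength hfin ht₀.1 ht.1 ht.2
  have htriangle := dist_triangle (γ 0) (γ t₀) (γ 1)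
  simp only at hdist
  linarith

end PathLength

theorem exists_companion_point_general {M : Type*} [MetricSpace M]
    (u v : M) (n : ℕ) (γ : ℝ → M)
    (hγ : IsPathFrom γ u v) (hfin : FiniteLength γ)
    (hL : pathLength γ < (1 + 1 / (18 * n)) * dist u v)
    (w : M) (hw : w ∈ γ '' Set.Icc (0:ℝ) 1) :
    (2 * (dist u v / (9 * n)) ≤ dist w v →
      ∃ z ∈ γ '' Set.Icc (0:ℝ) 1, dist w z = dist u v / (9 * n) ∧ dist z v < dist w v) ∧
    (2 * (dist u v / (9 * n)) ≤ dist w u →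
      ∃ z ∈ γ '' Set.Icc (0:ℝ) 1, dist w z = dist u v / (9 * n) ∧ dist z u < dist w u) := by
  have hr : 0 ≤ dist u v / (9 * n) := by positivity
  have hL' : pathLength γ < dist u v + dist u v / (9 * n) := by
    have : (1 + 1 / (18 * n)) * dist u v = dist u v + dist u v / (9 * n) / 2 := by ring
    linarith
  refine ⟨fun h => exists_dist_eq_dist_lt_of_pathLength_lt hγ hfin hw hr (by linarith) hL',
    fun h => ?_⟩
  rw [← image_comp_one_sub_Icc] at hw ⊢
  exact exists_dist_eq_dist_lt_of_pathLength_lt hγ.comp_one_sub hfin.comp_one_sub hw hr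
    (by linarith) (by rwa [pathLength_comp_one_sub, dist_comm])

theorem exists_companion_point {M : Type*} [MetricSpace M] (hM : IsLengthSpace M)
    (u v : M) (huv : u ≠ v) (n : ℕ) (hn : 0 < n) (γ : ℝ → M)
    (hγ : IsPathFrom γ u v) (hfin : FiniteLength γ)
    (hL : pathLength γ < (1 + 1 / (18 * n)) * dist u v)
    (w : M) (hw : w ∈ γ '' Set.Icc (0:ℝ) 1) :
    (2 * (dist u v / (9 * n)) ≤ dist w v →
      ∃ z ∈ γ '' Set.Icc (0:ℝ) 1, dist w z = dist u v / (9 * n) ∧ dist z v < dist w v) ∧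
    (2 * (dist u v / (9 * n)) ≤ dist w u →
      ∃ z ∈ γ '' Set.Icc (0:ℝ) 1, dist w z = dist u v / (9 * n) ∧ dist z u < dist w u) :=
  exists_companion_point_general u v n γ hγ hfin hL w hw
end
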